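/- Let (Ω, 𝓕, μ) be a standard Borel probability space, X : Ω → 𝒳 measurable, T : Ω → ℝ measurable, and Y₁, Y₀ : Ω → ℝ integrable. Assume unconfoundedness ((Y₁, Y₀) conditionally independent of T given σ(X)) and μ{T = 1} > 0, and let μ₁ = μ[· | {T = 1}]. Define the pseudo-outcome D¹ = Y₁ − μ[Y₀ | σ(X)]. Then the conditional expectation of D¹ given σ(X) under the conditional measure μ₁ equals the CATE: μ₁[D¹ | σ(X)] = μ[Y₁ − Y₀ | σ(X)] μ₁-almost everywhere. -/

import Mathlib

/-!
Given `σ(X)`, the outcome `Y₁` is independent of the treatment indicator `χ = 1_{T = 1}`, so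
computing fibrewise under the conditional expectation kernel gives
`μ[Y₁ χ | σ(X)] = μ[Y₁ | σ(X)] μ[χ | σ(X)]`. Integrating over `s ∈ σ(X)` and pulling the
`σ(X)`-measurable factor back in, `μ[Y₁ | σ(X)]` and `Y₁` have the same integral over every
`s ∩ {T = 1}`, so `μ[Y₁ | σ(X)]` is also the conditional expectation of `Y₁` under
`μ[· | T = 1]`. The second term `μ[Y₀ | σ(X)]` of the pseudo-outcome is `σ(X)`-measurable,
hence its own conditional expectation under any measure, and the claim follows by linearity.
-/

open MeasureTheory ProbabilityTheory

namespace ProbabilityTheory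

section Cond

variable {Ω E : Type*} {mΩ : MeasurableSpace Ω} {μ : Measure Ω} {A : Set Ω}
  [NormedAddCommGroup E]

lemma _root_.MeasureTheory.Integrable.cond {f : Ω → E} (hf : Integrable f μ) :
    Integrable f μ[|A] := by
  by_cases hA : μ A = 0
  · simp [cond_eq_zero_of_meas_eq_zero hA]
  · exact hf.restrict.smul_measure (ENNReal.inv_ne_top.2 hA)

lemma setIntegral_cond [NormedSpace ℝ E] {f : Ω → E} {s : Set Ω} (hs : MeasurableSet s) :
    ∫ ω in s, f ω ∂μ[|A] = (μ A)⁻¹.toReal • ∫ ω in s ∩ A, f ω ∂μ := by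
  rw [cond, Measure.restrict_smul, integral_smul_measure, Measure.restrict_restrict hs]

end Cond

section CondIndep

variable {Ω : Type*} {m' mΩ : MeasurableSpace Ω} [StandardBorelSpace Ω] {hm' : m' ≤ mΩ}
  {μ : Measure Ω} [IsFiniteMeasure μ]

variable (hm') in
lemma ae_ae_condExpKernel_of_ae {p : Ω → Prop} (h : ∀ᵐ ω ∂μ, p ω) :
    ∀ᵐ a ∂μ.trim hm', ∀ᵐ ω ∂condExpKernel μ m' a, p ω := by
  rw [← condExpKernel_comp_trim (μ := μ) hm'] at h
  exact Measure.ae_ae_of_ae_comp h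

lemma CondIndepFun.congr_ae {β β' : Type*} [MeasurableSpace β] [MeasurableSpace β']
    {f f' : Ω → β} {g g' : Ω → β'} (h : CondIndepFun m' hm' f g μ)
    (hf : f =ᵐ[μ] f') (hg : g =ᵐ[μ] g') : CondIndepFun m' hm' f' g' μ :=
  Kernel.IndepFun.congr' h (ae_ae_condExpKernel_of_ae hm' hf) (ae_ae_condExpKernel_of_ae hm' hg)

lemma CondIndepFun.ae_indepFun_condExpKernel {β β' : Type*} [MeasurableSpace β]
    [MeasurableSpace β'] [MeasurableSpace.CountableOrCountablyGenerated Ω (β × β')]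
    {f : Ω → β} {g : Ω → β'}
    (h : CondIndepFun m' hm' f g μ) (hf : Measurable f) (hg : Measurable g) :
    ∀ᵐ a ∂μ, IndepFun f g (condExpKernel μ m' a) := by
  refine ae_of_ae_trim hm' ?_
  filter_upwards [(condIndepFun_iff_map_prod_eq_prod_map_map hf hg).1 h] with a ha
  rw [indepFun_iff_map_prod_eq_prod_map_map hf.aemeasurable hg.aemeasurable]
  simpa [Kernel.map_apply _ hf, Kernel.map_apply _ hg, Kernel.map_apply _ (hf.prodMk hg),
    Kernel.prod_apply] using ha

lemma CondIndepFun.condExp_mul {f g : Ω → ℝ} (h : CondIndepFun m' hm' f g μ)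
    (hf : Integrable f μ) (hg : Integrable g μ) (hfg : Integrable (f * g) μ) :
    μ[f * g | m'] =ᵐ[μ] μ[f | m'] * μ[g | m'] := by
  -- the kernel form of conditional independence needs measurable functions
  set f' := hf.1.mk f
  set g' := hg.1.mk g
  have hff' : f =ᵐ[μ] f' := hf.1.ae_eq_mk
  have hgg' : g =ᵐ[μ] g' := hg.1.ae_eq_mk
  have hf' : Measurable f' := hf.1.stronglyMeasurable_mk.measurable
  have hg' : Measurable g' := hg.1.stronglyMeasurable_mk.measurable
  have hfg' : f * g =ᵐ[μ] f' * g' := hff'.mul hgg'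
  calc μ[f * g | m'] =ᵐ[μ] μ[f' * g' | m'] := condExp_congr_ae hfg'
    _ =ᵐ[μ] fun a ↦ ∫ ω, f' ω * g' ω ∂condExpKernel μ m' a :=
      condExp_ae_eq_integral_condExpKernel hm' (hfg.congr hfg')
    _ =ᵐ[μ] fun a ↦ (∫ ω, f' ω ∂condExpKernel μ m' a) * ∫ ω, g' ω ∂condExpKernel μ m' a := by
      filter_upwards [(h.congr_ae hff' hgg').ae_indepFun_condExpKernel hf' hg'] with a ha
      exact ha.integral_fun_mul_eq_mul_integral hf'.aestronglyMeasurable hg'.aestronglyMeasurable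
    _ =ᵐ[μ] μ[f' | m'] * μ[g' | m'] :=
      ((condExp_ae_eq_integral_condExpKernel hm' (hf.congr hff')).mul
        (condExp_ae_eq_integral_condExpKernel hm' (hg.congr hgg'))).symm
    _ =ᵐ[μ] μ[f | m'] * μ[g | m'] := (condExp_congr_ae hff').symm.mul (condExp_congr_ae hgg').symm

lemma CondIndepFun.setIntegral_inter_preimage_condExp {β : Type*} [MeasurableSpace β]
    {f : Ω → ℝ} {g : Ω → β} (h : CondIndepFun m' hm' f g μ) (hf : Integrable f μ)
    (hg : Measurable g) {t : Set β} (ht : MeasurableSet t) {s : Set Ω}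
    (hs : MeasurableSet[m'] s) :
    ∫ ω in s ∩ g ⁻¹' t, (μ[f | m']) ω ∂μ = ∫ ω in s ∩ g ⁻¹' t, f ω ∂μ := by
  set A := g ⁻¹' t
  set χ : Ω → ℝ := A.indicator 1
  have hA : MeasurableSet A := hg ht
  have hfχ : CondIndepFun m' hm' f χ μ := by
    have hχ_comp : χ = t.indicator 1 ∘ g := by
      ext ω
      by_cases hω : g ω ∈ t <;> simp [χ, A, hω]
    simpa [hχ_comp] using h.comp measurable_id (measurable_one.indicator ht)
  have mul_χ_eq (F : Ω → ℝ) : F * χ = A.indicator F := by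
    ext ω
    by_cases hω : ω ∈ A <;> simp [χ, hω]
  have inter_eq (F : Ω → ℝ) : ∫ ω in s ∩ A, F ω ∂μ = ∫ ω in s, (F * χ) ω ∂μ := by
    rw [mul_χ_eq, setIntegral_indicator hA]
  have integrable_mul_χ {F : Ω → ℝ} (hF : Integrable F μ) : Integrable (F * χ) μ := by
    rw [mul_χ_eq]
    exact hF.indicator hA
  have hχ : Integrable χ μ := (integrable_const (1 : ℝ)).indicator hA
  calc ∫ ω in s ∩ A, (μ[f | m']) ω ∂μ
      = ∫ ω in s, (μ[μ[f | m'] * χ | m']) ω ∂μ := by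
        rw [inter_eq, setIntegral_condExp hm' (integrable_mul_χ integrable_condExp) hs]
    _ = ∫ ω in s, (μ[f | m'] * μ[χ | m']) ω ∂μ :=
        setIntegral_congr_ae (hm' s hs) <| by
          filter_upwards [condExp_mul_of_stronglyMeasurable_left stronglyMeasurable_condExp
            (integrable_mul_χ integrable_condExp) hχ] with ω hω _ using hω
    _ = ∫ ω in s, (μ[f * χ | m']) ω ∂μ :=
        setIntegral_congr_ae (hm' s hs) <| by
          filter_upwards [hfχ.condExp_mul hf hχ (integrable_mul_χ hf)] with ω hω _ using hω.symm
    _ = ∫ ω in s ∩ A, f ω ∂μ := by rw [setIntegral_condExp hm' (integrable_mul_χ hf) hs, inter_eq]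

lemma CondIndepFun.condExp_cond_preimage_ae_eq {β : Type*} [MeasurableSpace β]
    {f : Ω → ℝ} {g : Ω → β} (h : CondIndepFun m' hm' f g μ) (hf : Integrable f μ)
    (hg : Measurable g) {t : Set β} (ht : MeasurableSet t) :
    μ[|g ⁻¹' t][f | m'] =ᵐ[μ[|g ⁻¹' t]] μ[f | m'] := by
  refine (ae_eq_condExp_of_forall_setIntegral_eq hm' hf.cond
    (fun s _ _ ↦ integrable_condExp.cond.integrableOn) (fun s hs _ ↦ ?_)
    stronglyMeasurable_condExp.aestronglyMeasurable).symm
  rw [setIntegral_cond (hm' s hs), setIntegral_cond (hm' s hs),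
    h.setIntegral_inter_preimage_condExp hf hg ht hs]

end CondIndep

end ProbabilityTheory

theorem xlearner_pseudo_outcome_recovers_cate_general
    {Ω 𝒳 : Type*} {mΩ : MeasurableSpace Ω} [StandardBorelSpace Ω] [MeasurableSpace 𝒳]
    (μ : Measure Ω) [IsProbabilityMeasure μ]
    (X : Ω → 𝒳) (hX : Measurable X)
    (T : Ω → ℝ) (hT : Measurable T)
    (Y₁ Y₀ : Ω → ℝ) (hY₁ : Integrable Y₁ μ) (hY₀ : Integrable Y₀ μ)
    (h_unconf : CondIndepFun (MeasurableSpace.comap X inferInstance) hX.comap_le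
      (fun ω => (Y₁ ω, Y₀ ω)) T μ)
    (D1 : Ω → ℝ)
    (hD : D1 = fun ω => Y₁ ω - (μ[Y₀ | MeasurableSpace.comap X inferInstance]) ω) :
    (μ[|{ω | T ω = 1}])[D1 | MeasurableSpace.comap X inferInstance]
      =ᵐ[μ[|{ω | T ω = 1}]]
        μ[fun ω => Y₁ ω - Y₀ ω | MeasurableSpace.comap X inferInstance] := by
  set mX := MeasurableSpace.comap X inferInstance
  set μ₁ := μ[|{ω | T ω = 1}]
  have hY₁T : CondIndepFun mX hX.comap_le Y₁ T μ := h_unconf.comp measurable_fst measurable_id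
  calc μ₁[D1 | mX] =ᵐ[μ₁] μ₁[Y₁ | mX] - μ₁[μ[Y₀ | mX] | mX] := by
        rw [hD]
        exact condExp_sub hY₁.cond integrable_condExp.cond mX
    _ =ᵐ[μ₁] μ[Y₁ | mX] - μ[Y₀ | mX] := by
        rw [condExp_of_stronglyMeasurable hX.comap_le stronglyMeasurable_condExp
          integrable_condExp.cond]
        exact (hY₁T.condExp_cond_preimage_ae_eq hY₁ hT (measurableSet_singleton 1)).sub
          Filter.EventuallyEq.rfl
    _ =ᵐ[μ₁] μ[Y₁ - Y₀ | mX] := cond_absolutelyContinuous.ae_eq (condExp_sub hY₁ hY₀ mX).symm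

/-- The population-level justification of the X-learner's first cross-fitting step: under
unconfoundedness, regressing the pseudo-outcome `D1 = Y₁ - μ[Y₀ | σ(X)]` on the covariates
within the treated group recovers the CATE `μ[Y₁ - Y₀ | σ(X)]`. -/
theorem xlearner_pseudo_outcome_recovers_cate
    {Ω 𝒳 : Type*} {mΩ : MeasurableSpace Ω} [StandardBorelSpace Ω] [MeasurableSpace 𝒳]
    (μ : Measure Ω) [IsProbabilityMeasure μ]
    (X : Ω → 𝒳) (hX : Measurable X)
    (T : Ω → ℝ) (hT : Measurable T)
    (Y₁ Y₀ : Ω → ℝ) (hY₁ : Integrable Y₁ μ) (hY₀ : Integrable Y₀ μ)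
    (h_unconf : CondIndepFun (MeasurableSpace.comap X inferInstance) hX.comap_le
      (fun ω => (Y₁ ω, Y₀ ω)) T μ)
    (hT1 : 0 < μ {ω | T ω = 1})
    (D1 : Ω → ℝ)
    (hD : D1 = fun ω => Y₁ ω - (μ[Y₀ | MeasurableSpace.comap X inferInstance]) ω) :
    (μ[|{ω | T ω = 1}])[D1 | MeasurableSpace.comap X inferInstance]
      =ᵐ[μ[|{ω | T ω = 1}]]
        μ[fun ω => Y₁ ω - Y₀ ω | MeasurableSpace.comap X inferInstance] :=
  xlearner_pseudo_outcome_recovers_cate_general (mΩ := mΩ) μ X hX T hT Y₁ Y₀ hY₁ hY₀ h_unconf D1 hD
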